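/- Generalized selection lemma (the all-north argument for an arbitrary choice of single-qubit colouring): for each r ∈ {1, …, n}, let N_r be a set of rays of ℂ² containing exactly one of the two rays of every pair of orthogonal unit vectors of ℂ² (i.e., for every unit ψ ∈ ℂ² with orthogonal complement spanned by ψ^⊥, exactly one of the rays ℂψ, ℂψ^⊥ belongs to N_r). Then every orthonormal basis of (ℂ²)^{⊗n} consisting of product vectors contains exactly one element ψ₁ ⊗ ⋯ ⊗ ψₙ such that the ray of ψ_r belongs to N_r for all r ∈ {1, …, n}. -/

import Mathlib

open scoped InnerProductSpace
open MeasureTheory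

noncomputable section

abbrev Qubit : Type := EuclideanSpace ℂ (Fin 2)
abbrev NQubit (n : ℕ) : Type := EuclideanSpace ℂ (Fin n → Fin 2)

/-- The product vector `ψ₁ ⊗ ⋯ ⊗ ψₙ` in `(ℂ²)^{⊗n}`, modelled concretely as
`EuclideanSpace ℂ (Fin n → Fin 2)`; its inner products satisfy
`⟨tens ψ, tens χ⟩ = ∏ j, ⟨ψ j, χ j⟩`. -/
noncomputable def tens {n : ℕ} (ψ : Fin n → Qubit) : NQubit n :=
  WithLp.toLp 2 (fun f => ∏ j, ψ j (f j))

/-- A vector of `(ℂ²)^{⊗n}` is a product vector if it is of the form `ψ₁ ⊗ ⋯ ⊗ ψₙ`. -/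
def IsProduct {n : ℕ} (v : NQubit n) : Prop := ∃ ψ : Fin n → Qubit, v = tens ψ

/-- A finite set of vectors forming an orthonormal basis of `H`. -/
def IsONBasis {H : Type*} [NormedAddCommGroup H] [InnerProductSpace ℂ H]
    (B : Finset H) : Prop :=
  Orthonormal ℂ (fun v : B => (v : H)) ∧ Submodule.span ℂ (B : Set H) = ⊤

/-- A KS-colouring of a set `S` of unit vectors: a `{0,1}`-valued map (modelled as a
predicate, `c v` meaning value `1`) such that every orthonormal basis contained in `S`
has exactly one element of value `1`, and no two mutually orthogonal elements of `S`
both have value `1`. -/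
def IsKSColouring {H : Type*} [NormedAddCommGroup H] [InnerProductSpace ℂ H]
    (S : Set H) (c : H → Prop) : Prop :=
  (∀ B : Finset H, ↑B ⊆ S → IsONBasis B → ∃! v, v ∈ B ∧ c v) ∧
  (∀ ψ ∈ S, ∀ χ ∈ S, ⟪ψ, χ⟫_ℂ = 0 → ¬(c ψ ∧ c χ))

/-! Split a product basis of `(ℂ²)^{⊗(n+1)}` according to whether the last factor is selected.
Within either half, distinct vectors have non-orthogonal last factors, so their first `n`
factors are orthogonal: each half gives an orthogonal family of nonzero vectors in
`(ℂ²)^{⊗n}` and has at most `2^n` elements. Hence both halves have exactly `2^n` elements,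
the selected half truncated to its first `n` factors is again a product basis, and induction
gives a selected vector. It is unique because two orthogonal product vectors are orthogonal
in some factor, and no selection contains both members of an orthogonal pair. -/

section RaySelection

variable {E : Type*} [NormedAddCommGroup E] [InnerProductSpace ℂ E]

def IsOrthogonalPairSelection (S : Set E) : Prop :=
  ∀ ψ χ : E, ψ ≠ 0 → χ ≠ 0 → ⟪ψ, χ⟫_ℂ = 0 → Xor (ψ ∈ S) (χ ∈ S)

lemma isOrthogonalPairSelection_of_unit {S : Set E}
    (hray : ∀ ψ : E, ∀ a : ℂ, a ≠ 0 → (ψ ∈ S ↔ a • ψ ∈ S))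
    (hsel : ∀ ψ χ : E, ‖ψ‖ = 1 → ‖χ‖ = 1 → ⟪ψ, χ⟫_ℂ = 0 → Xor (ψ ∈ S) (χ ∈ S)) :
    IsOrthogonalPairSelection S := by
  intro ψ χ hψ hχ h
  have hψ' : (‖ψ‖⁻¹ : ℂ) ≠ 0 := by simpa using hψ
  have hχ' : (‖χ‖⁻¹ : ℂ) ≠ 0 := by simpa using hχ
  rw [hray ψ _ hψ', hray χ _ hχ']
  refine hsel _ _ (norm_smul_inv_norm hψ) (norm_smul_inv_norm hχ) ?_
  rw [inner_smul_left, inner_smul_right, h, mul_zero, mul_zero]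

end RaySelection

section IsONBasis

variable {H : Type*} [NormedAddCommGroup H] [InnerProductSpace ℂ H] {B : Finset H}

lemma IsONBasis.inner_eq_zero (hB : IsONBasis B) {u v : H} (hu : u ∈ B) (hv : v ∈ B)
    (huv : u ≠ v) : ⟪u, v⟫_ℂ = 0 :=
  hB.1.2 (show (⟨u, hu⟩ : B) ≠ ⟨v, hv⟩ from fun h => huv (congrArg Subtype.val h))

lemma IsONBasis.card_eq_finrank (hB : IsONBasis B) : B.card = Module.finrank ℂ H := by
  rw [← finrank_span_finset_eq_card hB.1.linearIndependent, hB.2, finrank_top]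

end IsONBasis

lemma finrank_nQubit (n : ℕ) : Module.finrank ℂ (NQubit n) = 2 ^ n := by
  simp

lemma inner_tens {n : ℕ} (ψ χ : Fin n → Qubit) :
    ⟪tens ψ, tens χ⟫_ℂ = ∏ r, ⟪ψ r, χ r⟫_ℂ := by
  simp only [PiLp.inner_apply, RCLike.inner_apply', tens]
  rw [Fintype.prod_sum (fun r (i : Fin 2) => (starRingEnd ℂ) (ψ r i) * χ r i)]
  simp [map_prod, Finset.prod_mul_distrib]

lemma inner_tens_succ {n : ℕ} (ψ χ : Fin (n + 1) → Qubit) :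
    ⟪tens ψ, tens χ⟫_ℂ =
      ⟪tens (Fin.init ψ), tens (Fin.init χ)⟫_ℂ * ⟪ψ (Fin.last n), χ (Fin.last n)⟫_ℂ := by
  rw [inner_tens, inner_tens, Fin.prod_univ_castSucc]
  rfl

lemma tens_ne_zero_iff {n : ℕ} (ψ : Fin n → Qubit) : tens ψ ≠ 0 ↔ ∀ r, ψ r ≠ 0 := by
  rw [← inner_self_ne_zero (𝕜 := ℂ), inner_tens, Finset.prod_ne_zero_iff]
  simp only [Finset.mem_univ, true_imp_iff, inner_self_ne_zero]

lemma exists_forall_mem_of_pairwise_inner_tens_eq_zero {n : ℕ} (N : Fin n → Set Qubit)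
    (hN : ∀ r, IsOrthogonalPairSelection (N r))
    {ι : Type*} [Fintype ι] (v : ι → Fin n → Qubit) (hv : ∀ i r, v i r ≠ 0)
    (horth : Pairwise fun i j => ⟪tens (v i), tens (v j)⟫_ℂ = 0)
    (hcard : Fintype.card ι = 2 ^ n) : ∃ i, ∀ r, v i r ∈ N r := by
  classical
  induction n generalizing ι with
  | zero =>
    have : Nonempty ι := Fintype.card_pos_iff.mp (by simp [hcard])
    exact ⟨Classical.arbitrary ι, fun r => r.elim0⟩
  | succ n ih =>
    set P : ι → Prop := fun i => v i (Fin.last n) ∈ N (Fin.last n)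
    have horth_init : ∀ i j, i ≠ j → (P i ↔ P j) →
        ⟪tens (Fin.init (v i)), tens (Fin.init (v j))⟫_ℂ = 0 := by
      intro i j hij hPij
      refine (mul_eq_zero.mp ((inner_tens_succ _ _).symm.trans (horth hij))).resolve_right ?_
      intro h
      have := hN (Fin.last n) _ _ (hv i _) (hv j _) h
      simp only [xor_def] at this
      tauto
    have hcard_le : ∀ Q : ι → Prop, (∀ i j, Q i → Q j → (P i ↔ P j)) →
        Fintype.card {i // Q i} ≤ 2 ^ n := by
      intro Q hQ
      rw [← finrank_nQubit n]
      refine (linearIndependent_of_ne_zero_of_inner_eq_zero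
        (v := fun i : {i // Q i} => tens (Fin.init (v i)))
        (fun i => (tens_ne_zero_iff _).mpr fun r => hv i _)
        (fun i j hij => horth_init i j (Subtype.coe_ne_coe.mpr hij) (hQ i j i.2 j.2))
        ).fintype_card_le_finrank
    have hP := hcard_le P (fun i j hi hj => iff_of_true hi hj)
    have hnP := hcard_le (¬P ·) (fun i j hi hj => iff_of_false hi hj)
    rw [Fintype.card_subtype_compl, hcard] at hnP
    obtain ⟨⟨i, hi⟩, hiN⟩ := ih (fun r => N r.castSucc) (fun r => hN r.castSucc)
      (fun i : {i // P i} => Fin.init (v i)) (fun i r => hv i _)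
      (fun i j hij => horth_init i j (Subtype.coe_ne_coe.mpr hij) (iff_of_true i.2 j.2))
      (by omega)
    exact ⟨i, Fin.lastCases hi hiN⟩

lemma exists_notMem_of_inner_tens_eq_zero {n : ℕ} (N : Fin n → Set Qubit)
    (hN : ∀ r, IsOrthogonalPairSelection (N r))
    {ψ χ : Fin n → Qubit} (hψ : tens ψ ≠ 0) (hχ : tens χ ≠ 0)
    (h : ⟪tens ψ, tens χ⟫_ℂ = 0) (hψN : ∀ r, ψ r ∈ N r) : ∃ r, χ r ∉ N r := by
  obtain ⟨r, -, hr⟩ := Finset.prod_eq_zero_iff.mp ((inner_tens ψ χ).symm.trans h)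
  refine ⟨r, fun hχN => ?_⟩
  rcases hN r _ _ ((tens_ne_zero_iff ψ).mp hψ r) ((tens_ne_zero_iff χ).mp hχ r) hr with ⟨-, h⟩ | ⟨-, h⟩
  exacts [h hχN, h (hψN r)]

/-- generalized selection lemma: if, for each `r`, `N r` is a ray-invariant
set of qubit vectors containing exactly one ray out of every pair of orthogonal unit
vectors of `ℂ²`, then every orthonormal basis of `(ℂ²)^{⊗n}` consisting of product
vectors contains exactly one element `ψ₁ ⊗ ⋯ ⊗ ψₙ` with the ray of `ψ r` in `N r` for
all `r`. -/
theorem product_basis_exactly_one_selected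
    (n : ℕ) (N : Fin n → Set Qubit)
    (hray : ∀ r, ∀ ψ : Qubit, ∀ a : ℂ, a ≠ 0 → (ψ ∈ N r ↔ a • ψ ∈ N r))
    (hsel : ∀ r, ∀ ψ χ : Qubit, ‖ψ‖ = 1 → ‖χ‖ = 1 → ⟪ψ, χ⟫_ℂ = 0 →
      Xor' (ψ ∈ N r) (χ ∈ N r))
    (B : Finset (NQubit n)) (hB : IsONBasis B) (hprod : ∀ v ∈ B, IsProduct v) :
    ∃! v, v ∈ B ∧ ∃ ψ : Fin n → Qubit, v = tens ψ ∧ ∀ r, ψ r ∈ N r := by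
  have hN r := isOrthogonalPairSelection_of_unit (hray r) (hsel r)
  have hne : ∀ v ∈ B, v ≠ 0 := fun v hv => hB.1.ne_zero ⟨v, hv⟩
  choose! ψ hψ using hprod
  have hψ0 (v : B) : ∀ r, ψ v r ≠ 0 := (tens_ne_zero_iff _).mp (hψ v v.2 ▸ hne v v.2)
  have hψorth : Pairwise fun u v : B => ⟪tens (ψ u), tens (ψ v)⟫_ℂ = 0 := fun u v huv => by
    dsimp only
    rw [← hψ u u.2, ← hψ v v.2]
    exact hB.inner_eq_zero u.2 v.2 (Subtype.coe_ne_coe.mpr huv)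
  obtain ⟨⟨v, hv⟩, hvN⟩ := exists_forall_mem_of_pairwise_inner_tens_eq_zero N hN
    (fun v : B => ψ v) hψ0 hψorth (by rw [Fintype.card_coe, hB.card_eq_finrank, finrank_nQubit])
  refine ⟨v, ⟨hv, ψ v, hψ v hv, hvN⟩, ?_⟩
  rintro u ⟨hu, χ, rfl, hχN⟩
  by_contra huv
  obtain ⟨r, hr⟩ := exists_notMem_of_inner_tens_eq_zero N hN (hne _ hu)
    (hψ v hv ▸ hne v hv) (hψ v hv ▸ hB.inner_eq_zero hu hv huv) hχN
  exact hr (hvN r)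

end
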